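/- For any d ≥ 1 and any odd polynomials Q_1, …, Q_d ∈ t·ℤ[t²], there exists a constant C ∈ ℕ such that for every m ∈ ℤ_{≥0}^d one has 2^{C·(m_1+…+m_d)} · ⟨Q⟩_m ∈ ℤ[x_1, …, x_d]; that is, the power of 2 in the denominator of ⟨Q⟩_m grows at most linearly in m_1 + … + m_d. -/

import Mathlib

/-!
Multiply the recursion at `a` by `F (m - a)` and sum over `0 ≤ a ≤ m`. Symmetrizing under
`a ↦ m - a` twice turns `⟨m, x⟩ ∑ₐ F a F (m - a)` into `∑ᵢ ∑ (Qᵢ α + Qᵢ β) F b F c`, summed over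
`b + c = m - eᵢ`, with `α = ⟨b, x⟩ + xᵢ/2`, `β = ⟨c, x⟩ + xᵢ/2` and `α + β = ⟨m, x⟩`. As `Qᵢ` is
odd, `Qᵢ α + Qᵢ β = (α + β) Sᵢ(α, -β)` with `Sᵢ` the divided difference of `Qᵢ`, so `⟨m, x⟩`
cancels and
  `2 F m = ∑ᵢ ∑ Sᵢ(α, -β) F b F c - ∑_{0 < a < m} F a F (m - a)`.
Since `2α, 2β ∈ ℤ[x]`, `2^{deg Qᵢ} Sᵢ(α, -β) ∈ ℤ[x]`, and induction on `|m|` gives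
`2^{(D + 2)|m| - 1} F m ∈ ℤ[x]` for `m ≠ 0`, where `D` bounds the degrees of the `Qᵢ`.
-/

open Finset Polynomial

namespace Polynomial

variable {R : Type*} [CommRing R]

def divDiff (Q : ℤ[X]) (α β : R) : R :=
  ∑ k ∈ range (Q.natDegree + 1), (Q.coeff k : R) * ∑ r ∈ range k, α ^ r * β ^ (k - 1 - r)

theorem sub_mul_divDiff (Q : ℤ[X]) (α β : R) :
    (α - β) * divDiff Q α β = aeval α Q - aeval β Q := by
  simp only [divDiff, aeval_eq_sum_range, zsmul_eq_mul, ← sum_sub_distrib, ← mul_sub]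
  rw [mul_sum]
  refine sum_congr rfl fun k _ => ?_
  rw [← geom_sum₂_mul α β k]
  ring

theorem aeval_neg_of_coeff_even_eq_zero {S : Type*} [Ring S] {Q : ℤ[X]}
    (hQ : ∀ k, Q.coeff (2 * k) = 0) (β : S) : aeval (-β) Q = -aeval β Q := by
  simp only [aeval_eq_sum_range, ← sum_neg_distrib]
  refine sum_congr rfl fun k _ => ?_
  rcases Nat.even_or_odd' k with ⟨j, rfl | rfl⟩
  · simp [hQ j]
  · rw [Odd.neg_pow ⟨j, rfl⟩, smul_neg]

theorem pow_mul_divDiff_mem (Q : ℤ[X]) {A : Subring R} {c α β : R} (hc : c ∈ A)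
    (hα : c * α ∈ A) (hβ : c * β ∈ A) {N : ℕ} (hN : Q.natDegree ≤ N) :
    c ^ N * divDiff Q α β ∈ A := by
  rw [divDiff, mul_sum]
  refine A.sum_mem fun k hk => ?_
  rw [mul_left_comm, mul_sum]
  refine A.mul_mem (intCast_mem A _) (A.sum_mem fun r hr => ?_)
  have hk := mem_range.1 hk
  have hr := mem_range.1 hr
  have hsplit : c ^ N = c ^ (N + 1 - k) * c ^ r * c ^ (k - 1 - r) := by
    rw [← pow_add, ← pow_add]; congr 1; omega
  rw [hsplit, show c ^ (N + 1 - k) * c ^ r * c ^ (k - 1 - r) * (α ^ r * β ^ (k - 1 - r))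
      = c ^ (N + 1 - k) * ((c * α) ^ r * (c * β) ^ (k - 1 - r)) by ring]
  exact A.mul_mem (A.pow_mem hc _) (A.mul_mem (A.pow_mem hα _) (A.pow_mem hβ _))

end Polynomial

namespace Finset

variable {G M : Type*} [AddCommGroup G] [PartialOrder G] [IsOrderedAddMonoid G]
  [LocallyFiniteOrder G] [AddCommMonoid M]

theorem sum_Icc_zero_sub_left (n : G) (f : G → M) :
    ∑ a ∈ Icc 0 n, f (n - a) = ∑ a ∈ Icc 0 n, f a := by
  refine sum_nbij' (n - ·) (n - ·) ?_ ?_ (fun a _ => sub_sub_cancel n a)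
    (fun a _ => sub_sub_cancel n a) (fun _ _ => rfl) <;>
  · intro a ha
    simp only [mem_Icc] at ha ⊢
    exact ⟨sub_nonneg.2 ha.2, sub_le_self n ha.1⟩

theorem sum_Icc_zero_sub_right {n e : G} (he : 0 ≤ e) {f : G → M}
    (hf : ∀ b, ¬0 ≤ b → f b = 0) :
    ∑ a ∈ Icc 0 n, f (a - e) = ∑ b ∈ Icc 0 (n - e), f b := by
  have hshift : ∑ a ∈ Icc 0 n, f (a - e) = ∑ b ∈ Icc (-e) (n - e), f b := by
    have := map_add_right_Icc 0 n (-e)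
    rw [zero_add, ← sub_eq_add_neg] at this
    rw [← this, sum_map]
    simp [sub_eq_add_neg]
  rw [hshift]
  refine (sum_subset (Icc_subset_Icc_left (neg_nonpos.2 he)) fun b hb hb0 => hf b ?_).symm
  simp only [mem_Icc] at hb hb0
  exact fun h => hb0 ⟨h, hb.2⟩

theorem two_mul_sum_Icc_zero {R : Type*} [CommRing R] (n : G) (φ g : G → R) :
    2 * ∑ a ∈ Icc 0 n, φ a * (g a * g (n - a)) =
      ∑ a ∈ Icc 0 n, (φ a + φ (n - a)) * (g a * g (n - a)) := by
  have hrefl := sum_Icc_zero_sub_left n fun a => φ a * (g a * g (n - a))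
  simp only [sub_sub_cancel] at hrefl
  rw [two_mul]
  nth_rewrite 2 [← hrefl]
  rw [← sum_add_distrib]
  exact sum_congr rfl fun a _ => by ring

end Finset

section

variable {ι K : Type*} [Fintype ι] [Field K]

def pairing (x : ι → K) : (ι → ℤ) →+ K where
  toFun v := ∑ j, (v j : K) * x j
  map_zero' := by simp
  map_add' v w := by simp [add_mul, sum_add_distrib]

@[simp]
theorem pairing_apply (x : ι → K) (v : ι → ℤ) : pairing x v = ∑ j, (v j : K) * x j := rfl

theorem pairing_mem {A : Subring K} {x : ι → K} (hx : ∀ i, x i ∈ A) (v : ι → ℤ) :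
    pairing x v ∈ A :=
  A.sum_mem fun j _ => A.mul_mem (intCast_mem A _) (hx j)

theorem two_pow_mul_divDiff_mem [CharZero K] {A : Subring K} {x : ι → K} (hx : ∀ i, x i ∈ A)
    {P : ℤ[X]} {D : ℕ} (hD : P.natDegree ≤ D) (i : ι) (b c : ι → ℤ) :
    2 ^ D * divDiff P (pairing x b + x i / 2) (-(pairing x c + x i / 2)) ∈ A := by
  have h2 : (2 : K) ∈ A := ofNat_mem A 2
  have hhalf (v : ι → ℤ) : 2 * (pairing x v + x i / 2) ∈ A := by
    rw [mul_add, mul_div_cancel₀ _ two_ne_zero]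
    exact A.add_mem (A.mul_mem h2 (pairing_mem hx v)) (hx i)
  exact pow_mul_divDiff_mem P h2 (hhalf b) (by rw [mul_neg]; exact A.neg_mem (hhalf c)) hD

def weight (m : ι → ℤ) : ℕ := (∑ i, m i).toNat

theorem weight_add {a b : ι → ℤ} (ha : 0 ≤ a) (hb : 0 ≤ b) :
    weight (a + b) = weight a + weight b := by
  simp only [weight, Pi.add_apply, sum_add_distrib]
  exact Int.toNat_add (sum_nonneg fun i _ => ha i) (sum_nonneg fun i _ => hb i)

theorem weight_pos {a : ι → ℤ} (ha : 0 < a) : 0 < weight a := by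
  obtain ⟨i, hi⟩ := (Pi.lt_def.1 ha).2
  rw [weight, Int.lt_toNat, Nat.cast_zero]
  exact hi.trans_le (single_le_sum (fun j _ => ha.le j) (mem_univ i))

variable [DecidableEq ι]

theorem weight_single (i : ι) : weight (Pi.single i (1 : ℤ)) = 1 := by
  simp [weight]

theorem weight_add_weight_sub_single_sub {m b : ι → ℤ} {i : ι} (hb : 0 ≤ b)
    (hbm : b ≤ m - Pi.single i 1) :
    weight b + weight (m - Pi.single i 1 - b) + 1 = weight m := by
  rw [← weight_single i, ← weight_add hb (sub_nonneg.2 hbm),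
    ← weight_add (add_nonneg hb (sub_nonneg.2 hbm)) (Pi.single_nonneg.2 zero_le_one)]
  congr 1
  abel

theorem pairing_single (x : ι → K) (i : ι) : pairing x (Pi.single i 1) = x i := by
  simp [Pi.single_apply]

/-- `F m` plays the role of `⟨Q⟩_m`. -/
structure IsBracket (Q : ι → ℤ[X]) (x : ι → K) (F : (ι → ℤ) → K) : Prop where
  apply_zero : F 0 = 1
  apply_of_not_nonneg : ∀ m, ¬0 ≤ m → F m = 0
  pairing_mul : ∀ m, 0 < m →
    pairing x m * F m = ∑ i, aeval (pairing x m - x i / 2) (Q i) * F (m - Pi.single i 1)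

namespace IsBracket

variable {Q : ι → ℤ[X]} {x : ι → K} {F : (ι → ℤ) → K}

theorem pairing_mul_of_nonneg (hF : IsBracket Q x F) {m : ι → ℤ} (hm : 0 ≤ m) :
    pairing x m * F m = ∑ i, aeval (pairing x m - x i / 2) (Q i) * F (m - Pi.single i 1) := by
  rcases hm.lt_or_eq with hm | rfl
  · exact hF.pairing_mul m hm
  rw [map_zero, zero_mul]
  refine (sum_eq_zero fun i _ => ?_).symm
  rw [hF.apply_of_not_nonneg, mul_zero]
  exact fun h => by simpa using h i

theorem two_pow_weight_mul_mem_of_pred (hF : IsBracket Q x F) {A : Subring K} {C : ℕ}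
    (hC : 1 ≤ C) {a : ι → ℤ} (ha : 0 ≤ a) (h : 0 < a → 2 ^ (C * weight a - 1) * F a ∈ A) :
    2 ^ (C * weight a) * F a ∈ A := by
  rcases ha.lt_or_eq with ha | rfl
  · have := A.mul_mem (ofNat_mem A 2) (h ha)
    rwa [← mul_assoc, ← pow_succ', Nat.sub_add_cancel (Nat.mul_pos hC (weight_pos ha))] at this
  · simp [weight, hF.apply_zero]

variable [CharZero K]

theorem pairing_mul_sum_Icc (hF : IsBracket Q x F) (m : ι → ℤ) :
    pairing x m * ∑ a ∈ Icc 0 m, F a * F (m - a) =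
      2 * ∑ i, ∑ b ∈ Icc 0 (m - Pi.single i 1),
        aeval (pairing x b + x i / 2) (Q i) * (F b * F (m - Pi.single i 1 - b)) := by
  have hshift (i : ι) (a : ι → ℤ) :
      aeval (pairing x a - x i / 2) (Q i) * F (a - Pi.single i 1) * F (m - a) =
        aeval (pairing x (a - Pi.single i 1) + x i / 2) (Q i) *
          (F (a - Pi.single i 1) * F (m - Pi.single i 1 - (a - Pi.single i 1))) := by
    rw [map_sub, pairing_single, sub_sub_sub_cancel_right, sub_add, sub_half, mul_assoc]
  calc pairing x m * ∑ a ∈ Icc 0 m, F a * F (m - a)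
      = ∑ a ∈ Icc 0 m, (pairing x a + pairing x (m - a)) * (F a * F (m - a)) := by
        simp only [← map_add, add_sub_cancel, mul_sum]
    _ = 2 * ∑ a ∈ Icc 0 m, (pairing x a * F a) * F (m - a) := by
        rw [← two_mul_sum_Icc_zero]
        simp only [mul_assoc]
    _ = 2 * ∑ i, ∑ a ∈ Icc 0 m,
          aeval (pairing x a - x i / 2) (Q i) * F (a - Pi.single i 1) * F (m - a) := by
        rw [sum_comm]
        refine congrArg _ (sum_congr rfl fun a ha => ?_)
        rw [hF.pairing_mul_of_nonneg (mem_Icc.1 ha).1, sum_mul]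
    _ = _ := by
        simp only [hshift]
        congr 1
        refine sum_congr rfl fun i _ => sum_Icc_zero_sub_right (Pi.single_nonneg.2 zero_le_one)
          (f := fun b => aeval (pairing x b + x i / 2) (Q i) * (F b * F (m - Pi.single i 1 - b)))
          fun b hb => ?_
        rw [hF.apply_of_not_nonneg b hb, zero_mul, mul_zero]

theorem sum_Icc_mul_eq (hF : IsBracket Q x F) (hQ : ∀ i k, (Q i).coeff (2 * k) = 0)
    {m : ι → ℤ} (hmx : pairing x m ≠ 0) :
    ∑ a ∈ Icc 0 m, F a * F (m - a) =
      ∑ i, ∑ b ∈ Icc 0 (m - Pi.single i 1),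
        divDiff (Q i) (pairing x b + x i / 2) (-(pairing x (m - Pi.single i 1 - b) + x i / 2)) *
          (F b * F (m - Pi.single i 1 - b)) := by
  refine mul_left_cancel₀ hmx ?_
  rw [hF.pairing_mul_sum_Icc, mul_sum, mul_sum]
  refine sum_congr rfl fun i _ => ?_
  rw [two_mul_sum_Icc_zero, mul_sum]
  refine sum_congr rfl fun b _ => ?_
  have hsum : (pairing x b + x i / 2) - -(pairing x (m - Pi.single i 1 - b) + x i / 2) =
      pairing x m := by
    rw [sub_neg_eq_add, add_add_add_comm, add_halves, ← map_add, ← pairing_single x i,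
      ← map_add, add_sub_cancel, sub_add_cancel]
  rw [← hsum, ← mul_assoc (_ - _), sub_mul_divDiff, aeval_neg_of_coeff_even_eq_zero (hQ i),
    sub_neg_eq_add]

theorem two_mul_apply_eq (hF : IsBracket Q x F) (hQ : ∀ i k, (Q i).coeff (2 * k) = 0)
    {m : ι → ℤ} (hm : 0 < m) (hmx : pairing x m ≠ 0) :
    2 * F m =
      (∑ i, ∑ b ∈ Icc 0 (m - Pi.single i 1),
        divDiff (Q i) (pairing x b + x i / 2) (-(pairing x (m - Pi.single i 1 - b) + x i / 2)) *
          (F b * F (m - Pi.single i 1 - b))) - ∑ a ∈ Ioo 0 m, F a * F (m - a) := by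
  rw [← hF.sum_Icc_mul_eq hQ hmx, ← Ico_insert_right hm.le, sum_insert right_notMem_Ico,
    ← Ioo_insert_left hm, sum_insert left_notMem_Ioo, sub_zero, sub_self, hF.apply_zero]
  ring

theorem two_pow_mul_mem (hF : IsBracket Q x F) (hQ : ∀ i k, (Q i).coeff (2 * k) = 0)
    (hx : ∀ m, 0 < m → pairing x m ≠ 0) {A : Subring K} (hxA : ∀ i, x i ∈ A) {D : ℕ}
    (hD : ∀ i, (Q i).natDegree ≤ D) {m : ι → ℤ} (hm : 0 < m) :
    2 ^ ((D + 2) * weight m - 1) * F m ∈ A := by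
  induction hn : weight m using Nat.strong_induction_on generalizing m with
  | _ n ih =>
  have hle : ∀ a, 0 ≤ a → weight a < n → 2 ^ ((D + 2) * weight a) * F a ∈ A :=
    fun a ha han => hF.two_pow_weight_mul_mem_of_pred (by omega) ha fun ha => ih _ han ha rfl
  have hmn : 1 ≤ n := hn ▸ weight_pos hm
  have hsplit : (2 : K) ^ ((D + 2) * n - 1) * F m = 2 ^ ((D + 2) * n - 2) * (2 * F m) := by
    have : D + 2 ≤ (D + 2) * n := Nat.le_mul_of_pos_right _ hmn
    rw [← mul_assoc, ← pow_succ]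
    congr 2
    omega
  rw [hsplit, hF.two_mul_apply_eq hQ hm (hx m hm), mul_sub, mul_sum]
  refine A.sub_mem (A.sum_mem fun i _ => ?_) ?_
  · rw [mul_sum]
    refine A.sum_mem fun b hb => ?_
    obtain ⟨hb0, hbm⟩ := mem_Icc.1 hb
    have hw := hn ▸ weight_add_weight_sub_single_sub hb0 hbm
    have hexp : (D + 2) * n - 2 =
        D + (D + 2) * weight b + (D + 2) * weight (m - Pi.single i 1 - b) := by
      rw [← hw]
      refine Nat.sub_eq_of_eq_add ?_
      ring
    have := A.mul_mem (two_pow_mul_divDiff_mem hxA (hD i) i b (m - Pi.single i 1 - b))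
      (A.mul_mem (hle b hb0 (by omega)) (hle _ (sub_nonneg.2 hbm) (by omega)))
    rw [hexp, pow_add, pow_add]
    convert this using 1
    ring
  · rw [mul_sum]
    refine A.sum_mem fun a ha => ?_
    obtain ⟨ha0, ham⟩ := mem_Ioo.1 ha
    have hma : 0 < m - a := sub_pos.2 ham
    have hw : weight a + weight (m - a) = n := by
      rw [← hn, ← weight_add ha0.le hma.le, add_sub_cancel]
    have hwa := weight_pos ha0
    have hwma := weight_pos hma
    have hexp : (D + 2) * n - 2 = ((D + 2) * weight a - 1) + ((D + 2) * weight (m - a) - 1) := by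
      have := Nat.le_mul_of_pos_right (D + 2) hwa
      have := Nat.le_mul_of_pos_right (D + 2) hwma
      rw [← hw, mul_add]
      omega
    have := A.mul_mem (ih _ (by omega) ha0 rfl) (ih _ (by omega) hma rfl)
    rw [hexp, pow_add]
    convert this using 1
    ring

end IsBracket

theorem pairing_algebraMap_X_ne_zero {R : Type*} [CommRing R] [CharZero R]
    [Algebra (MvPolynomial ι R) K] [IsFractionRing (MvPolynomial ι R) K]
    {m : ι → ℤ} (hm : m ≠ 0) :
    pairing (fun j => algebraMap (MvPolynomial ι R) K (MvPolynomial.X j)) m ≠ 0 := by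
  obtain ⟨i, hi⟩ := Function.ne_iff.1 hm
  have h : pairing (fun j => algebraMap (MvPolynomial ι R) K (MvPolynomial.X j)) m =
      algebraMap (MvPolynomial ι R) K (∑ j, (m j : MvPolynomial ι R) * MvPolynomial.X j) := by
    simp [map_sum]
  rw [h, ne_eq, map_eq_zero_iff _ (IsFractionRing.injective _ K)]
  intro h0
  have := congrArg (MvPolynomial.eval (Pi.single i 1)) h0
  simp [Pi.single_apply] at this
  exact hi this

end

theorem statement13_general
    (d : ℕ)
    (Q : Fin d → Polynomial ℤ)
    (hQodd : ∀ i, ∀ k : ℕ, (Q i).coeff (2 * k) = 0)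
    (K : Type*) [Field K]
    [Algebra (MvPolynomial (Fin d) ℚ) K] [IsFractionRing (MvPolynomial (Fin d) ℚ) K]
    (x : Fin d → K)
    (hx : ∀ i, x i = algebraMap (MvPolynomial (Fin d) ℚ) K (MvPolynomial.X i))
    (F : (Fin d → ℤ) → K)
    (hF0 : F 0 = 1)
    (hFneg : ∀ m : Fin d → ℤ, (∃ i, m i < 0) → F m = 0)
    (hFrec : ∀ m : Fin d → ℤ, (∀ i, 0 ≤ m i) → m ≠ 0 →
      (∑ i, (m i : K) * x i) * F m =
        ∑ i, Polynomial.aeval ((∑ j, (m j : K) * x j) - x i / 2) (Q i) *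
          F (m - Pi.single i 1)) :
    ∃ C : ℕ, ∀ m : Fin d → ℤ, (∀ i, 0 ≤ m i) →
      (2 : K) ^ (C * (∑ i, m i).toNat) * F m ∈ Algebra.adjoin ℤ (Set.range x) := by
  obtain rfl : x = fun i => algebraMap (MvPolynomial (Fin d) ℚ) K (MvPolynomial.X i) := funext hx
  have : CharZero K :=
    charZero_of_injective_algebraMap (IsFractionRing.injective (MvPolynomial (Fin d) ℚ) K)
  have hF : IsBracket Q _ F :=
    { apply_zero := hF0
      apply_of_not_nonneg := fun m hm => hFneg m (by simpa [Pi.le_def] using hm)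
      pairing_mul := fun m hm => hFrec m hm.le hm.ne' }
  obtain ⟨D, hD⟩ : ∃ D, ∀ i, (Q i).natDegree ≤ D :=
    ⟨_, fun i => le_sup (f := fun i => (Q i).natDegree) (mem_univ i)⟩
  refine ⟨D + 2, fun m hm => Subalgebra.mem_toSubring.1 ?_⟩
  refine hF.two_pow_weight_mul_mem_of_pred (by omega) hm fun hm => ?_
  exact hF.two_pow_mul_mem hQodd (fun m hm => pairing_algebraMap_X_ne_zero hm.ne')
    (fun i => Algebra.subset_adjoin (Set.mem_range_self i)) hD hm

/-- For odd polynomials `Q 1, …, Q d ∈ t·ℤ[t²]`, there is a constant `C ∈ ℕ` such that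
`2^{C·(m₁+…+m_d)}·⟨Q⟩ₘ ∈ ℤ[x₁,…,x_d]` for every `m ∈ ℤ_{≥0}^d`; i.e. the power of `2`
in the denominator of `⟨Q⟩ₘ` grows at most linearly in `m₁ + … + m_d`. -/
theorem statement13
    (d : ℕ) (hd : 1 ≤ d)
    (Q : Fin d → Polynomial ℤ)
    (hQodd : ∀ i, ∀ k : ℕ, (Q i).coeff (2 * k) = 0)
    (K : Type*) [Field K]
    [Algebra (MvPolynomial (Fin d) ℚ) K] [IsFractionRing (MvPolynomial (Fin d) ℚ) K]
    (x : Fin d → K)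
    (hx : ∀ i, x i = algebraMap (MvPolynomial (Fin d) ℚ) K (MvPolynomial.X i))
    (F : (Fin d → ℤ) → K)
    (hF0 : F 0 = 1)
    (hFneg : ∀ m : Fin d → ℤ, (∃ i, m i < 0) → F m = 0)
    (hFrec : ∀ m : Fin d → ℤ, (∀ i, 0 ≤ m i) → m ≠ 0 →
      (∑ i, (m i : K) * x i) * F m =
        ∑ i, Polynomial.aeval ((∑ j, (m j : K) * x j) - x i / 2) (Q i) *
          F (m - Pi.single i 1)) :
    ∃ C : ℕ, ∀ m : Fin d → ℤ, (∀ i, 0 ≤ m i) →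
      (2 : K) ^ (C * (∑ i, m i).toNat) * F m ∈ Algebra.adjoin ℤ (Set.range x) :=
  statement13_general d Q hQodd K x hx F hF0 hFneg hFrec
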